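/- arXiv:2510.20000 — 2 statements merged into one kernel-verified Lean document; each statement's English description precedes it below -/
import Mathlib

section
/- Let b_x, d_x > 0 for x ≥ 1 be birth and death rates of a birth-and-death chain. Suppose there exist M > 1 and q > 1 such that for all x ≥ M, b_x/d_x ≥ 1 + 1/x + q/(x log x). Then the series Σ_{x=1}^∞ Π_{y=1}^x (d_y/b_y) converges (i.e., is finite). -/
/-!
The products `aₙ = ∏_{y ≤ n} d_y / b_y` are compared, ratio by ratio, with the summable Bertrand
sequence `gₙ = 1 / ((n + 1) log^r (n + 1))` for an exponent `1 < r < q`. Since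
`log (s + 1) ≤ log s · (1 + 1 / (s log s))`, one gets `g_{n-1} ≤ ρₙ gₙ` for large `n`, where
`ρₙ = 1 + 1/n + q/(n log n) ≤ bₙ / dₙ`. Hence `aₙ / gₙ` is eventually nonincreasing, so
`aₙ = O(gₙ)`.
-/

open Real Finset Filter Topology

theorem summable_of_eventually_mul_succ_le {a g : ℕ → ℝ} (hg : Summable g)
    (ha : ∀ᶠ n in atTop, 0 ≤ a n) (hg_pos : ∀ᶠ n in atTop, 0 < g n)
    (h : ∀ᶠ n in atTop, a (n + 1) * g n ≤ a n * g (n + 1)) : Summable a := by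
  obtain ⟨N, hN⟩ := eventually_atTop.mp (ha.and (hg_pos.and h))
  have hbound : ∀ n ≥ N, a n ≤ a N / g N * g n := by
    intro n hn
    induction n, hn using Nat.le_induction with
    | base => rw [div_mul_cancel₀ _ (hN N le_rfl).2.1.ne']
    | succ n hn ih =>
      obtain ⟨-, hgn, hstep⟩ := hN n hn
      rw [← div_le_iff₀ hgn] at ih
      calc a (n + 1) ≤ a n / g n * g (n + 1) := by
            rw [div_mul_eq_mul_div, le_div_iff₀ hgn]; exact hstep
        _ ≤ a N / g N * g (n + 1) :=
            mul_le_mul_of_nonneg_right ih (hN (n + 1) (by omega)).2.1.le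
  refine (hg.mul_left (a N / g N)).of_norm_bounded_eventually_nat ?_
  filter_upwards [eventually_ge_atTop N] with n hn
  rw [Real.norm_of_nonneg (hN n hn).1]
  exact hbound n hn

namespace Real

theorem summable_inv_nat_mul_log_rpow {r : ℝ} (hr : 1 < r) :
    Summable fun n : ℕ => ((n : ℝ) * log n ^ r)⁻¹ := by
  rw [← summable_condensed_iff_of_eventually_nonneg]
  · have hcond (k : ℕ) :
        (2 : ℝ) ^ k * (((2 ^ k : ℕ) : ℝ) * log ((2 ^ k : ℕ) : ℝ) ^ r)⁻¹
          = (log 2 ^ r)⁻¹ * ((k : ℝ) ^ r)⁻¹ := by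
      rw [Nat.cast_pow, Nat.cast_ofNat, log_pow, mul_rpow k.cast_nonneg (log_nonneg one_le_two),
        mul_inv, ← mul_assoc, mul_inv_cancel₀ (by positivity), one_mul, mul_inv, mul_comm]
    simp only [hcond]
    exact (summable_nat_rpow_inv.mpr hr).mul_left _
  · exact Eventually.of_forall fun n => by positivity
  · filter_upwards [eventually_ge_atTop 2] with k hk
    have hlog : 0 < log k := log_pos (by norm_cast)
    apply inv_anti₀ (by positivity)
    gcongr <;> exact_mod_cast k.le_succ

theorem log_add_one_le_log_add_inv {s : ℝ} (hs : 0 < s) : log (s + 1) ≤ log s + s⁻¹ := by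
  have h := log_le_sub_one_of_pos (div_pos (by linarith : 0 < s + 1) hs)
  rw [log_div (by linarith) hs.ne'] at h
  have : (s + 1) / s - 1 = s⁻¹ := by field_simp; ring
  linarith

theorem one_add_rpow_le_of_le_two {t r : ℝ} (ht : -1 < t) (hr1 : 1 ≤ r) (hr2 : r ≤ 2) :
    (1 + t) ^ r ≤ (1 + t) * (1 + (r - 1) * t) := by
  calc (1 + t) ^ r = (1 + t) * (1 + t) ^ (r - 1) := by
        rw [← rpow_one_add' (by linarith) (by linarith)]; ring_nf
    _ ≤ (1 + t) * (1 + (r - 1) * t) := by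
        gcongr
        · linarith
        exact rpow_one_add_le_one_add_mul_self ht.le (by linarith) (by linarith)

theorem eventually_succ_mul_log_rpow_le {r q : ℝ} (hr1 : 1 ≤ r) (hr2 : r ≤ 2) (hrq : r < q) :
    ∀ᶠ s : ℝ in atTop,
      (s + 1) * log (s + 1) ^ r ≤ (1 + 1 / s + q / (s * log s)) * (s * log s ^ r) := by
  have hlim : Tendsto (fun s : ℝ => (1 + s⁻¹) * (r + (r - 1) * s⁻¹)) atTop (𝓝 r) := by
    have h0 := tendsto_inv_atTop_zero (𝕜 := ℝ)
    simpa using ((tendsto_const_nhds (x := (1 : ℝ))).add h0).mul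
      ((tendsto_const_nhds (x := r)).add (h0.const_mul (r - 1)))
  filter_upwards [hlim.eventually (gt_mem_nhds hrq), eventually_ge_atTop (exp 1)] with s hsq hse
  have hs : 0 < s := (exp_pos 1).trans_le hse
  set L := log s
  have hL : 1 ≤ L := (le_log_iff_exp_le hs).mpr hse
  set t := (s * L)⁻¹ with htdef
  have ht : t ≤ s⁻¹ := by
    rw [htdef, mul_inv]
    exact mul_le_of_le_one_right (by positivity) (inv_le_one_of_one_le₀ hL)
  have hlog : log (s + 1) ≤ L * (1 + t) := by
    have := log_add_one_le_log_add_inv hs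
    rw [htdef, mul_add, mul_one, mul_inv, ← mul_assoc, mul_comm L, mul_assoc,
      mul_inv_cancel₀ (by linarith), mul_one]
    linarith
  have hpow : log (s + 1) ^ r ≤ L ^ r * ((1 + t) * (1 + (r - 1) * t)) :=
    calc log (s + 1) ^ r ≤ (L * (1 + t)) ^ r :=
          rpow_le_rpow (log_nonneg (by linarith)) hlog (by linarith)
      _ = L ^ r * (1 + t) ^ r := mul_rpow (by linarith) (by positivity)
      _ ≤ L ^ r * ((1 + t) * (1 + (r - 1) * t)) := by
          gcongr
          exact one_add_rpow_le_of_le_two (by linarith [show 0 ≤ t by positivity]) hr1 hr2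
  have halg : (s + 1) * ((1 + t) * (1 + (r - 1) * t)) ≤ s * (1 + 1 / s + q / (s * L)) :=
    calc (s + 1) * ((1 + t) * (1 + (r - 1) * t))
        = s + 1 + (1 + s⁻¹) * (r + (r - 1) * t) / L := by
          rw [htdef]; field_simp; ring
      _ ≤ s + 1 + q / L := by
          gcongr
          refine le_trans ?_ hsq.le
          gcongr
      _ = s * (1 + 1 / s + q / (s * L)) := by field_simp
  calc (s + 1) * log (s + 1) ^ r ≤ (s + 1) * (L ^ r * ((1 + t) * (1 + (r - 1) * t))) := by
        gcongr
    _ = ((s + 1) * ((1 + t) * (1 + (r - 1) * t))) * L ^ r := by ring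
    _ ≤ s * (1 + 1 / s + q / (s * L)) * L ^ r := by gcongr
    _ = (1 + 1 / s + q / (s * L)) * (s * L ^ r) := by ring

end Real

theorem stmt14_general (b d : ℕ → ℝ)
    (hb : ∀ x ≥ 1, 0 < b x) (hd : ∀ x ≥ 1, 0 < d x)
    (M : ℕ) (q : ℝ) (hq : 1 < q)
    (h : ∀ x : ℕ, M ≤ x →
      b x / d x ≥ 1 + 1/(x : ℝ) + q/((x : ℝ) * Real.log (x : ℝ))) :
    Summable (fun x : ℕ => ∏ y ∈ Finset.Icc 1 x, d y / b y) := by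
  set r := min 2 ((1 + q) / 2)
  have hr1 : 1 < r := lt_min one_lt_two (by linarith)
  have hrq : r < q := (min_le_right _ _).trans_lt (by linarith)
  set g : ℕ → ℝ := fun n => (((n + 1 : ℕ) : ℝ) * log ((n + 1 : ℕ) : ℝ) ^ r)⁻¹
  have hg : Summable g := (summable_nat_add_iff 1).mpr (summable_inv_nat_mul_log_rpow hr1)
  have hg_pos : ∀ n ≥ 1, 0 < g n := fun n hn => by
    have : (2 : ℝ) ≤ ((n + 1 : ℕ) : ℝ) := by exact_mod_cast (by omega : 2 ≤ n + 1)
    have := log_pos (by linarith : (1 : ℝ) < ((n + 1 : ℕ) : ℝ))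
    positivity
  have hprod_nonneg : ∀ n, 0 ≤ ∏ y ∈ Icc 1 n, d y / b y := fun n =>
    prod_nonneg fun y hy => (div_pos (hd y (mem_Icc.mp hy).1) (hb y (mem_Icc.mp hy).1)).le
  have hkey := (tendsto_natCast_atTop_atTop.comp (tendsto_add_atTop_nat 1)).eventually
    (eventually_succ_mul_log_rpow_le hr1.le (min_le_left _ _) hrq)
  refine summable_of_eventually_mul_succ_le hg (.of_forall hprod_nonneg)
    (eventually_ge_atTop 1 |>.mono hg_pos) ?_
  filter_upwards [hkey, eventually_ge_atTop M, eventually_ge_atTop 1] with n hn hnM hn1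
  rw [prod_Icc_succ_top (by omega), mul_assoc]
  gcongr
  · exact hprod_nonneg n
  have hρ := h (n + 1) (by omega)
  have hlog_pos : 0 < log ((n + 1 : ℕ) : ℝ) := log_pos (by norm_cast; omega)
  have hQ_pos := hg_pos (n + 1) (by omega)
  simp only [g, Function.comp_apply, Nat.cast_succ] at hn hQ_pos hρ hlog_pos ⊢
  calc d (n + 1) / b (n + 1) * ((n + 1) * log (n + 1) ^ r)⁻¹
      = (b (n + 1) / d (n + 1) * ((n + 1) * log (n + 1) ^ r))⁻¹ := by
        rw [mul_inv (b _ / _), inv_div]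
    _ ≤ ((n + 1 + 1) * log (n + 1 + 1) ^ r)⁻¹ :=
        inv_anti₀ (inv_pos.mp hQ_pos) (hn.trans (by gcongr))

theorem stmt14 (b d : ℕ → ℝ)
    (hb : ∀ x ≥ 1, 0 < b x) (hd : ∀ x ≥ 1, 0 < d x)
    (M : ℕ) (hM : 1 < M) (q : ℝ) (hq : 1 < q)
    (h : ∀ x : ℕ, M ≤ x →
      b x / d x ≥ 1 + 1/(x : ℝ) + q/((x : ℝ) * Real.log (x : ℝ))) :
    Summable (fun x : ℕ => ∏ y ∈ Finset.Icc 1 x, d y / b y) :=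
  stmt14_general b d hb hd M q hq h
end

section
/- Let b_x, d_x > 0 for x ≥ 1. Suppose there exists M > 1 such that for all x ≥ M, b_x/d_x ≤ 1 + 1/x + 1/(x log x). Then Σ_{x=1}^∞ Π_{y=1}^x (d_y/b_y) = ∞. -/
/-!
With `w t = t log t`, the hypothesis gives `b_x / d_x ≤ w (x + 1) / w x` for `x ≥ M`, because
`(t + 1) (log (t + 1) - log t) ≥ 1`. Hence `w (x + 1) ∏_{y ≤ x} d_y / b_y` is nondecreasing from `M`
on, so the `x`-th term is at least `c / w (x + 1)` for a constant `c > 0`. These lower bounds are not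
summable: they dominate the increments of `log (log (x + 1))`, which tends to infinity.
-/

open Real Finset Filter

lemma Real.log_sub_log_le_div {a b : ℝ} (ha : 0 < a) (hb : 0 < b) :
    log b - log a ≤ (b - a) / a := by
  have := log_le_sub_one_of_pos (div_pos hb ha)
  rwa [log_div hb.ne' ha.ne', div_sub_one ha.ne'] at this

lemma Real.inv_add_one_le_log_add_one_sub_log {t : ℝ} (ht : 0 < t) :
    1 / (t + 1) ≤ log (t + 1) - log t := by
  have := one_sub_inv_le_log_of_pos (div_pos (by linarith : 0 < t + 1) ht)
  rw [log_div (by linarith) ht.ne', inv_div] at this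
  convert this using 1
  field_simp
  ring

lemma Real.one_add_inv_add_inv_mul_log_le {t : ℝ} (ht : 1 < t) :
    1 + 1 / t + 1 / (t * log t) ≤ (t + 1) * log (t + 1) / (t * log t) := by
  have hlog : 0 < log t := log_pos ht
  have hstep := inv_add_one_le_log_add_one_sub_log (by linarith : 0 < t)
  rw [le_div_iff₀ (by positivity)]
  have hexpand : (1 + 1 / t + 1 / (t * log t)) * (t * log t) = t * log t + log t + 1 := by
    field_simp
  rw [hexpand]
  rw [div_le_iff₀ (by linarith)] at hstep
  linarith

lemma Real.mul_log_le_div_mul_of_div_le {b d t : ℝ} (hb : 0 < b) (hd : 0 < d) (ht : 1 < t)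
    (h : b / d ≤ 1 + 1 / t + 1 / (t * log t)) :
    t * log t ≤ d / b * ((t + 1) * log (t + 1)) := by
  have hratio := h.trans (one_add_inv_add_inv_mul_log_le ht)
  rw [div_le_div_iff₀ hd (mul_pos (by linarith) (log_pos ht))] at hratio
  rw [div_mul_eq_mul_div, le_div_iff₀ hb]
  linarith

lemma Real.log_log_add_one_sub_le {t : ℝ} (ht : 1 < t) :
    log (log (t + 1)) - log (log t) ≤ 1 / (t * log t) := by
  have hlog : 0 < log t := log_pos ht
  have hlog' : 0 < log (t + 1) := log_pos (by linarith)
  have hinner : log (t + 1) - log t ≤ 1 / t := by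
    simpa using log_sub_log_le_div (by linarith : 0 < t) (by linarith : 0 < t + 1)
  calc log (log (t + 1)) - log (log t) ≤ (log (t + 1) - log t) / log t :=
        log_sub_log_le_div hlog hlog'
    _ ≤ 1 / t / log t := by gcongr
    _ = 1 / (t * log t) := by rw [div_div]

lemma tendsto_sum_Icc_atTop_of_sub_le {a g : ℕ → ℝ} {M : ℕ} (hg : Tendsto g atTop atTop)
    (hag : ∀ x ≥ M, g (x + 1) - g x ≤ a x) :
    Tendsto (fun n => ∑ x ∈ Icc M n, a x) atTop atTop := by
  have hlower : Tendsto (fun n => g (n + 1) - g M) atTop atTop :=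
    tendsto_atTop_add_const_right _ _ (hg.comp (tendsto_add_atTop_nat 1))
  refine tendsto_atTop_mono' atTop ?_ hlower
  filter_upwards [eventually_ge_atTop M] with n hn
  rw [← sum_Icc_sub hn]
  exact sum_le_sum fun x hx => hag x (mem_Icc.mp hx).1

lemma tendsto_sum_Icc_inv_mul_log_atTop {M : ℕ} (hM : 1 ≤ M) :
    Tendsto (fun n => ∑ x ∈ Icc M n, 1 / (((x : ℝ) + 1) * log ((x : ℝ) + 1))) atTop atTop := by
  refine tendsto_sum_Icc_atTop_of_sub_le (g := fun x => log (log ((x : ℝ) + 1))) ?_ ?_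
  · exact tendsto_log_atTop.comp <| tendsto_log_atTop.comp <|
      tendsto_atTop_add_const_right _ _ tendsto_natCast_atTop_atTop
  · intro x hx
    have hx1 : (1 : ℝ) < x + 1 := by
      have : (1 : ℝ) ≤ x := by exact_mod_cast hM.trans hx
      linarith
    simpa using log_log_add_one_sub_le hx1

lemma monotoneOn_prod_Icc_mul {r w : ℕ → ℝ} {M : ℕ} (hr : ∀ x ≥ 1, 0 ≤ r x)
    (hw : ∀ n ≥ M, w n ≤ r (n + 1) * w (n + 1)) :
    MonotoneOn (fun n => (∏ x ∈ Icc 1 n, r x) * w n) (Set.Ici M) := by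
  refine monotoneOn_nat_Ici_of_le_succ fun n hn => ?_
  rw [prod_Icc_succ_top (by omega), mul_assoc]
  exact mul_le_mul_of_nonneg_left (hw n hn) (prod_nonneg fun x hx => hr x (mem_Icc.mp hx).1)

theorem stmt15 (b d : ℕ → ℝ)
    (hb : ∀ x ≥ 1, 0 < b x) (hd : ∀ x ≥ 1, 0 < d x)
    (M : ℕ) (hM : 1 < M)
    (h : ∀ x : ℕ, M ≤ x →
      b x / d x ≤ 1 + 1/(x : ℝ) + 1/((x : ℝ) * Real.log (x : ℝ))) :
    Tendsto (fun n : ℕ => ∑ x ∈ Finset.Icc 1 n, ∏ y ∈ Finset.Icc 1 x, d y / b y)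
      atTop atTop := by
  set P : ℕ → ℝ := fun n => ∏ y ∈ Icc 1 n, d y / b y
  set w : ℕ → ℝ := fun n => ((n : ℝ) + 1) * log ((n : ℝ) + 1)
  have hr : ∀ x ≥ 1, 0 < d x / b x := fun x hx => div_pos (hd x hx) (hb x hx)
  have hP : ∀ n, 0 < P n := fun n => prod_pos fun x hx => hr x (mem_Icc.mp hx).1
  have hgt : ∀ n ≥ M, (1 : ℝ) < n + 1 := fun n hn => by
    have : (1 : ℝ) < n := by exact_mod_cast hM.trans_le hn
    linarith
  have hwpos : ∀ n ≥ M, 0 < w n := fun n hn =>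
    mul_pos (by linarith [hgt n hn]) (log_pos (hgt n hn))
  have hw : ∀ n ≥ M, w n ≤ d (n + 1) / b (n + 1) * w (n + 1) := fun n hn => by
    have hratio := h (n + 1) (by omega)
    simp only [w]
    push_cast at hratio ⊢
    exact mul_log_le_div_mul_of_div_le (hb _ (by omega)) (hd _ (by omega)) (hgt n hn) hratio
  have hterm : ∀ n ≥ M, P M * w M / w n ≤ P n := fun n hn =>
    (div_le_iff₀ (hwpos n hn)).mpr <|
      monotoneOn_prod_Icc_mul (fun x hx => (hr x hx).le) hw Set.self_mem_Ici hn hn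
  have hsum := (tendsto_sum_Icc_inv_mul_log_atTop (by omega : 1 ≤ M)).const_mul_atTop
    (mul_pos (hP M) (hwpos M le_rfl))
  refine tendsto_atTop_mono (fun n => ?_) hsum
  rw [mul_sum]
  calc ∑ x ∈ Icc M n, P M * w M * (1 / w x) ≤ ∑ x ∈ Icc M n, P x :=
        sum_le_sum fun x hx => by rw [mul_one_div]; exact hterm x (mem_Icc.mp hx).1
    _ ≤ ∑ x ∈ Icc 1 n, P x :=
        sum_le_sum_of_subset_of_nonneg (Icc_subset_Icc_left (by omega)) fun x _ _ => (hP x).le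
end
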